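/- Let G = (V,E) be a cubic graph with n vertices. Construct the SR instance I with agents A ∪ B ∪ V ∪ W ∪ X ∪ Y as in the reduction (with a_j and b_j mutually first choices for 1 ≤ j ≤ 4, and preference lists: v_i: w_i, v_i^1, v_i^2, v_i^3, y_i, ...; w_i: x_i, a_1, a_2, a_3, a_4, v_i, ...; x_i: a_1, y_i, w_i, ...; y_i: v_i, x_i, ...). Then G has a vertex cover of size at most K if and only if I admits a stable matching M with profile p(M) ⪰ ⟨2n−K+8, 2K, n−K, 0, n−K, K⟩ lexicographically. -/

import Mathlib

/-- Agents of the SR instance constructed from a graph with vertex set `V`: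
`a_1..a_4`, `b_1..b_4`, and `v_i, w_i, x_i, y_i` for each vertex `i`. -/
inductive Agent (V : Type) where
  | a (j : Fin 4)
  | b (j : Fin 4)
  | v (i : V)
  | w (i : V)
  | x (i : V)
  | y (i : V)
deriving DecidableEq

noncomputable instance {V : Type} [Fintype V] : Fintype (Agent V) := by
  classical
  exact Fintype.ofInjective
    (fun z : Agent V => match z with
      | .a j => (Sum.inl (Sum.inl j) : (Fin 4 ⊕ Fin 4) ⊕ (V ⊕ V) ⊕ (V ⊕ V))
      | .b j => Sum.inl (Sum.inr j)
      | .v i => Sum.inr (Sum.inl (Sum.inl i))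
      | .w i => Sum.inr (Sum.inl (Sum.inr i))
      | .x i => Sum.inr (Sum.inr (Sum.inl i))
      | .y i => Sum.inr (Sum.inr (Sum.inr i)))
    (by intro z z' h; cases z <;> cases z' <;> simp_all)

/-- `rank` is a valid SR preference profile: each agent strictly ranks all other
agents with ranks `1, ..., #agents − 1`. -/
def ValidRank {V : Type} [Fintype V] [DecidableEq V] (rank : Agent V → Agent V → ℕ) : Prop :=
  ∀ z : Agent V,
    (∀ c c' : Agent V, c ≠ z → c' ≠ z → rank z c = rank z c' → c = c') ∧
    (∀ c : Agent V, c ≠ z → 1 ≤ rank z c ∧ rank z c ≤ Fintype.card (Agent V) - 1)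

/-- The preference-list prefixes prescribed by the reduction (the `...` parts of the
lists are arbitrary). -/
def ReductionPrefs {V : Type} [Fintype V] [DecidableEq V] (G : SimpleGraph V)
    (rank : Agent V → Agent V → ℕ) : Prop :=
  (∀ j : Fin 4, rank (.a j) (.b j) = 1 ∧ rank (.b j) (.a j) = 1) ∧
  (∀ i : V,
    rank (.v i) (.w i) = 1 ∧
    (∀ u : V, G.Adj i u → rank (.v i) (.v u) ∈ ({2, 3, 4} : Set ℕ)) ∧
    rank (.v i) (.y i) = 5 ∧
    rank (.w i) (.x i) = 1 ∧ rank (.w i) (.a 0) = 2 ∧ rank (.w i) (.a 1) = 3 ∧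
    rank (.w i) (.a 2) = 4 ∧ rank (.w i) (.a 3) = 5 ∧ rank (.w i) (.v i) = 6 ∧
    rank (.x i) (.a 0) = 1 ∧ rank (.x i) (.y i) = 2 ∧ rank (.x i) (.w i) = 3 ∧
    rank (.y i) (.v i) = 1 ∧ rank (.y i) (.x i) = 2)

/-- `M` is a (perfect) matching of the agents: a fixed-point-free involution. -/
def IsMatching {V : Type} (M : Agent V → Agent V) : Prop :=
  (∀ z : Agent V, M (M z) = z) ∧ (∀ z : Agent V, M z ≠ z)

/-- `M` is stable: no two agents strictly prefer each other to their partners. -/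
def IsStable {V : Type} (rank : Agent V → Agent V → ℕ) (M : Agent V → Agent V) : Prop :=
  ¬ ∃ z c : Agent V, z ≠ c ∧ rank z c < rank z (M z) ∧ rank c z < rank c (M c)

open Classical in
/-- The profile of a matching: entry `k` counts the agents matched to their `k`th choice. -/
noncomputable def profileOf {V : Type} [Fintype V] [DecidableEq V]
    (rank : Agent V → Agent V → ℕ) (M : Agent V → Agent V) : ℕ → ℤ :=
  fun k => ((Finset.univ.filter (fun z : Agent V => rank z (M z) = k)).card : ℤ)

/-- Lexicographic `≤` on integer sequences. -/
def LexLE (σ p : ℕ → ℤ) : Prop :=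
  σ = p ∨ ∃ k : ℕ, σ k < p k ∧ ∀ j : ℕ, j < k → σ j = p j

/-- The target profile `⟨2n−K+8, 2K, n−K, 0, n−K, K⟩` of the reduction. -/
def targetProfile (n K : ℕ) : ℕ → ℤ := fun k =>
  if k = 1 then 2 * (n : ℤ) - K + 8
  else if k = 2 then 2 * (K : ℤ)
  else if k = 3 then (n : ℤ) - K
  else if k = 4 then 0
  else if k = 5 then (n : ℤ) - K
  else if k = 6 then (K : ℤ)
  else 0

/-!
A vertex cover `C` yields the matching `coverMatching C`: `aⱼbⱼ`, and for each vertex `i` the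
pairs `vᵢwᵢ, xᵢyᵢ` if `i ∈ C` and `vᵢyᵢ, wᵢxᵢ` otherwise. Its profile is
`⟨2n−|C|+8, 2|C|, n−|C|, 0, n−|C|, |C|⟩`, and it is stable exactly when `C` covers every edge:
an uncovered edge `ii'` leaves `vᵢ, vᵢ'` with their fifth choices although they rank each other
among their first four. Conversely, in a stable matching the mutual first choices `aⱼbⱼ` are
matched, and then each gadget `vᵢ, wᵢ, xᵢ, yᵢ` is forced into one of the two shapes above, so every
stable matching is `coverMatching C` for some `C`. Finally the target profile is lexicographically
antitone in its parameter, so the profile bound says `|C| ≤ K`.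
-/

open Finset

variable {V : Type}

theorem IsMatching.eq_comm {M : Agent V → Agent V} (hM : IsMatching M) {z c : Agent V} :
    M z = c ↔ M c = z :=
  ⟨fun h => h ▸ hM.1 z, fun h => h ▸ hM.1 c⟩

def coverMatching [DecidableEq V] (C : Finset V) : Agent V → Agent V
  | .a j => .b j
  | .b j => .a j
  | .v i => if i ∈ C then .w i else .y i
  | .w i => if i ∈ C then .v i else .x i
  | .x i => if i ∈ C then .y i else .w i
  | .y i => if i ∈ C then .x i else .v i

def coverRank [DecidableEq V] (C : Finset V) : Agent V → ℕ
  | .a _ => 1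
  | .b _ => 1
  | .v i => if i ∈ C then 1 else 5
  | .w i => if i ∈ C then 6 else 1
  | .x i => if i ∈ C then 2 else 3
  | .y i => if i ∈ C then 2 else 1

theorem isMatching_coverMatching [DecidableEq V] (C : Finset V) :
    IsMatching (coverMatching C) := by
  constructor <;> intro z <;> cases z <;> simp only [coverMatching] <;> (try split_ifs) <;>
    simp_all

def Agent.equivSum : Agent V ≃ (Fin 4 ⊕ Fin 4) ⊕ (V ⊕ V) ⊕ (V ⊕ V) where
  toFun
    | .a j => .inl (.inl j)
    | .b j => .inl (.inr j)
    | .v i => .inr (.inl (.inl i))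
    | .w i => .inr (.inl (.inr i))
    | .x i => .inr (.inr (.inl i))
    | .y i => .inr (.inr (.inr i))
  invFun
    | .inl (.inl j) => .a j
    | .inl (.inr j) => .b j
    | .inr (.inl (.inl i)) => .v i
    | .inr (.inl (.inr i)) => .w i
    | .inr (.inr (.inl i)) => .x i
    | .inr (.inr (.inr i)) => .y i
  left_inv z := by cases z <;> rfl
  right_inv s := by rcases s with (_ | _) | (_ | _) | (_ | _) <;> rfl

theorem lexLE_targetProfile_iff {n K c : ℕ} :
    LexLE (targetProfile n K) (targetProfile n c) ↔ c ≤ K := by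
  constructor
  · rintro (heq | ⟨k, hk, hpre⟩)
    · have := congrFun heq 1
      simp only [targetProfile, if_true] at this
      omega
    · rcases k with _ | _ | k
      · simp [targetProfile] at hk
      · simp only [targetProfile, zero_add, if_true] at hk
        omega
      · have := hpre 1 (by omega)
        simp only [targetProfile, if_true] at this
        omega
  · intro hcK
    rcases hcK.lt_or_eq with hlt | rfl
    · refine .inr ⟨1, ?_, fun j hj => ?_⟩
      · simp only [targetProfile, if_true]
        omega
      · obtain rfl : j = 0 := by omega
        simp [targetProfile]
    · exact .inl rfl

variable [Fintype V] [DecidableEq V] {rank : Agent V → Agent V → ℕ} {M : Agent V → Agent V}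

theorem sum_apply_ite_mem {α : Type*} (C : Finset V) (f : α → ℤ) (a b : α) :
    ∑ i, f (if i ∈ C then a else b) = #C * f a + (Fintype.card V - #C) * f b := by
  simp only [apply_ite f]
  rw [sum_ite, filter_mem_eq_inter, univ_inter, filter_not, filter_mem_eq_inter, univ_inter,
    ← compl_eq_univ_sdiff]
  simp [card_compl, Nat.cast_sub (card_le_univ C)]

namespace ValidRank

theorem one_le (hvalid : ValidRank rank) {z c : Agent V} (hc : c ≠ z) : 1 ≤ rank z c :=
  ((hvalid z).2 c hc).1

theorem eq_of_rank_eq (hvalid : ValidRank rank) {z c c' : Agent V} (hc : c ≠ z) (hc' : c' ≠ z)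
    (h : rank z c = rank z c') : c = c' :=
  (hvalid z).1 c c' hc hc' h

theorem mem_of_rank_lt (hvalid : ValidRank rank) {z : Agent V} {S : Finset (Agent V)} {k : ℕ}
    (hzS : z ∉ S) (hS : ∀ c ∈ S, rank z c < k) (hcard : k ≤ #S + 1) {d : Agent V} (hd : d ≠ z)
    (hdk : rank z d < k) : d ∈ S := by
  have hne : ∀ c ∈ S, c ≠ z := fun c hc h => hzS (h ▸ hc)
  have himage : S.image (rank z) = Ico 1 k := by
    refine eq_of_subset_of_card_le (fun r hr => ?_) ?_
    · obtain ⟨c, hc, rfl⟩ := mem_image.1 hr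
      exact mem_Ico.2 ⟨hvalid.one_le (hne c hc), hS c hc⟩
    · rw [card_image_of_injOn fun c hc c' hc' h =>
        hvalid.eq_of_rank_eq (hne c hc) (hne c' hc') h, Nat.card_Ico]
      omega
  obtain ⟨c, hc, hcd⟩ := mem_image.1 (himage ▸ mem_Ico.2 ⟨hvalid.one_le hd, hdk⟩)
  exact hvalid.eq_of_rank_eq (hne c hc) hd hcd ▸ hc

theorem lt_rank_partner (hvalid : ValidRank rank) (hM : IsMatching M) {z c : Agent V}
    (hcz : c ≠ z) (hne : M z ≠ c) (hz : ∀ d, d ≠ z → rank z d < rank z c → M z ≠ d) :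
    rank z c < rank z (M z) :=
  lt_of_le_of_ne (not_lt.1 fun h => hz _ (hM.2 z) h rfl)
    fun h => hne (hvalid.eq_of_rank_eq (hM.2 z) hcz h.symm)

end ValidRank

theorem IsStable.eq_of_forall_preferred_ne (hs : IsStable rank M) (hvalid : ValidRank rank)
    (hM : IsMatching M) {z c : Agent V} (hzc : z ≠ c)
    (hz : ∀ d, d ≠ z → rank z d < rank z c → M z ≠ d)
    (hc : ∀ d, d ≠ c → rank c d < rank c z → M c ≠ d) : M z = c := by
  by_contra hne
  exact hs ⟨z, c, hzc, hvalid.lt_rank_partner hM hzc.symm hne hz,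
    hvalid.lt_rank_partner hM hzc (mt hM.eq_comm.1 hne) hc⟩

namespace ReductionPrefs

variable {G : SimpleGraph V}

theorem eq_of_rank_y_lt (hprefs : ReductionPrefs G rank) (hvalid : ValidRank rank) {i : V}
    {d : Agent V} (hd : d ≠ .y i) (h : rank (.y i) d < 2) : d = .v i := by
  obtain ⟨-, -, -, -, -, -, -, -, -, -, -, -, hyv, -⟩ := hprefs.2 i
  simpa using hvalid.mem_of_rank_lt (S := {.v i}) (by simp) (by simp [hyv]) (by simp) hd h

theorem eq_of_rank_x_lt (hprefs : ReductionPrefs G rank) (hvalid : ValidRank rank) {i : V}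
    {d : Agent V} (hd : d ≠ .x i) (h : rank (.x i) d < 3) : d = .a 0 ∨ d = .y i := by
  obtain ⟨-, -, -, -, -, -, -, -, -, hxa, hxy, -⟩ := hprefs.2 i
  simpa using hvalid.mem_of_rank_lt (S := {.a 0, .y i}) (by simp) (by simp [hxa, hxy])
    (by simp) hd h

theorem eq_of_rank_w_lt (hprefs : ReductionPrefs G rank) (hvalid : ValidRank rank) {i : V}
    {d : Agent V} (hd : d ≠ .w i) (h : rank (.w i) d < 6) : d = .x i ∨ ∃ j, d = .a j := by
  obtain ⟨-, -, -, hwx, hwa0, hwa1, hwa2, hwa3, -⟩ := hprefs.2 i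
  have := hvalid.mem_of_rank_lt (S := {.x i, .a 0, .a 1, .a 2, .a 3}) (by simp)
    (by simp [hwx, hwa0, hwa1, hwa2, hwa3]) (by simp) hd h
  simp only [mem_insert, mem_singleton] at this
  rcases this with h | h | h | h | h <;> simp [h]

/-- Cubicity is used here: the three neighbours of `i` fill all of the ranks `2, 3, 4`. -/
theorem eq_of_rank_v_lt (hprefs : ReductionPrefs G rank) (hvalid : ValidRank rank)
    [DecidableRel G.Adj] {i : V} (hdeg : G.degree i = 3) {d : Agent V} (hd : d ≠ .v i)
    (h : rank (.v i) d < 5) : d = .w i ∨ ∃ u, G.Adj i u ∧ d = .v u := by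
  obtain ⟨hvw, hadj, -⟩ := hprefs.2 i
  have := hvalid.mem_of_rank_lt (S := insert (.w i) ((G.neighborFinset i).image .v)) (by simp)
    ?_ ?_ hd h
  · simpa [eq_comm] using this
  · simp only [mem_insert, mem_image, SimpleGraph.mem_neighborFinset, forall_eq_or_imp,
      forall_exists_index, and_imp, forall_apply_eq_imp_iff₂, hvw]
    refine ⟨by norm_num, fun u hu => ?_⟩
    have := hadj u hu
    simp only [Set.mem_insert_iff, Set.mem_singleton_iff] at this
    omega
  · rw [card_insert_of_notMem (by simp), card_image_of_injective _ fun _ _ h => by cases h; rfl,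
      G.card_neighborFinset_eq_degree, hdeg]

end ReductionPrefs

variable {G : SimpleGraph V}

theorem rank_coverMatching (hprefs : ReductionPrefs G rank) (C : Finset V) (z : Agent V) :
    rank z (coverMatching C z) = coverRank C z := by
  cases z with
  | a j => exact (hprefs.1 j).1
  | b j => exact (hprefs.1 j).2
  | _ i =>
    obtain ⟨hvw, -, hvy, hwx, -, -, -, -, hwv, -, hxy, hxw, hyv, hyx⟩ := hprefs.2 i
    simp only [coverMatching, coverRank]
    split_ifs <;> assumption

theorem profileOf_coverMatching (hprefs : ReductionPrefs G rank) (C : Finset V) :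
    profileOf rank (coverMatching C) = targetProfile (Fintype.card V) #C := by
  funext k
  let ind : ℕ → ℤ := fun n => if n = k then 1 else 0
  have hsum : profileOf rank (coverMatching C) k = ∑ z, ind (coverRank C z) := by
    simp only [profileOf, natCast_card_filter, rank_coverMatching hprefs, ind]
  rw [hsum, ← (Agent.equivSum (V := V)).symm.sum_comp]
  simp only [Fintype.sum_sum_type, Agent.equivSum, Equiv.coe_fn_symm_mk, coverRank,
    sum_apply_ite_mem, sum_const, card_univ, Fintype.card_fin]
  simp only [targetProfile, ind]
  rcases k with _ | _ | _ | _ | _ | _ | _ | k <;> simp <;> ring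

theorem isStable_coverMatching_iff [DecidableRel G.Adj] (hcubic : ∀ i : V, G.degree i = 3)
    (hvalid : ValidRank rank) (hprefs : ReductionPrefs G rank) (C : Finset V) :
    IsStable rank (coverMatching C) ↔ G.IsVertexCover C := by
  constructor
  · intro hs u u' hadj
    have prefers_nbr : ∀ {u u' : V}, G.Adj u u' → u ∉ C →
        rank (.v u) (.v u') < rank (.v u) (coverMatching C (.v u)) := fun {u u'} hadj hu => by
      obtain ⟨-, hr, hvy, -⟩ := hprefs.2 u
      have := hr u' hadj
      simp only [Set.mem_insert_iff, Set.mem_singleton_iff] at this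
      simp only [coverMatching, hu, if_false, hvy]
      omega
    by_contra! h
    exact hs ⟨.v u, .v u', by simp [hadj.ne], prefers_nbr hadj h.1, prefers_nbr hadj.symm h.2⟩
  · rintro hcover ⟨z, c, hzc, hz, hc⟩
    rw [rank_coverMatching hprefs] at hz hc
    -- both members of a blocking pair must have `coverRank ≥ 2`
    have hc1 := hvalid.one_le hzc
    have hz1 := hvalid.one_le hzc.symm
    cases z with
    | a j => simp only [coverRank] at hz; omega
    | b j => simp only [coverRank] at hz; omega
    | v i =>
      by_cases hi : i ∈ C
      · simp only [coverRank, hi, if_true] at hz; omega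
      simp only [coverRank, hi, if_false] at hz
      rcases hprefs.eq_of_rank_v_lt hvalid (hcubic i) hzc.symm hz with rfl | ⟨u, hu, rfl⟩
      · simp only [coverRank, hi, if_false] at hc; omega
      · have huC : u ∈ C := (hcover hu).resolve_left hi
        simp only [coverRank, huC, if_true] at hc; omega
    | w i =>
      by_cases hi : i ∈ C
      · simp only [coverRank, hi, if_true] at hz
        obtain ⟨-, -, -, -, -, -, -, -, -, -, -, hxw, -⟩ := hprefs.2 i
        rcases hprefs.eq_of_rank_w_lt hvalid hzc.symm hz with rfl | ⟨j, rfl⟩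
        · simp only [coverRank, hi, if_true, hxw] at hc; omega
        · simp only [coverRank] at hc; omega
      · simp only [coverRank, hi, if_false] at hz; omega
    | x i =>
      obtain ⟨-, -, -, -, -, -, -, -, -, -, hxy, -⟩ := hprefs.2 i
      have : rank (.x i) c < 3 := by simp only [coverRank] at hz; split_ifs at hz <;> omega
      rcases hprefs.eq_of_rank_x_lt hvalid hzc.symm this with rfl | rfl
      · simp only [coverRank] at hc; omega
      · by_cases hi : i ∈ C
        · simp only [coverRank, hi, if_true, hxy] at hz; omega
        · simp only [coverRank, hi, if_false] at hc; omega
    | y i =>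
      by_cases hi : i ∈ C
      · simp only [coverRank, hi, if_true] at hz
        obtain rfl := hprefs.eq_of_rank_y_lt hvalid hzc.symm hz
        simp only [coverRank, hi, if_true] at hc; omega
      · simp only [coverRank, hi, if_false] at hz; omega

namespace IsStable

theorem apply_a_eq_b (hs : IsStable rank M) (hvalid : ValidRank rank) (hM : IsMatching M)
    (hprefs : ReductionPrefs G rank) (j : Fin 4) : M (.a j) = .b j := by
  refine hs.eq_of_forall_preferred_ne hvalid hM (by simp) (fun d hd h => ?_) (fun d hd h => ?_)
  · have := hvalid.one_le hd; have := (hprefs.1 j).1; omega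
  · have := hvalid.one_le hd; have := (hprefs.1 j).2; omega

theorem gadget_cases (hs : IsStable rank M) (hvalid : ValidRank rank) (hM : IsMatching M)
    (hprefs : ReductionPrefs G rank) (i : V) :
    M (.v i) = .w i ∧ M (.x i) = .y i ∨ M (.v i) = .y i ∧ M (.w i) = .x i := by
  obtain ⟨hvw, -, -, hwx, -, -, -, -, hwv, hxa, hxy, hxw, hyv, hyx⟩ := hprefs.2 i
  have ha : ∀ j z, z ≠ .b j → M z ≠ .a j := fun j z hz h =>
    hz ((hM.eq_comm.1 h).symm.trans (hs.apply_a_eq_b hvalid hM hprefs j))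
  by_cases hy : M (.y i) = .v i
  · refine .inr ⟨hM.eq_comm.2 hy, hs.eq_of_forall_preferred_ne hvalid hM (by simp)
      (fun d hd h => ?_) (fun d hd h => ?_)⟩
    · have := hvalid.one_le hd; omega
    · rcases hprefs.eq_of_rank_x_lt hvalid hd (hxw ▸ h) with rfl | rfl
      · exact ha 0 _ (by simp)
      · exact fun h' => by simp [hM.eq_comm.1 h'] at hy
  have hyx' : M (.y i) = .x i := by
    refine hs.eq_of_forall_preferred_ne hvalid hM (by simp)
      (fun d hd h => by rw [hprefs.eq_of_rank_y_lt hvalid hd (hyx ▸ h)]; exact hy)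
      (fun d hd h => ?_)
    rcases hprefs.eq_of_rank_x_lt hvalid hd (by omega) with rfl | rfl
    · exact ha 0 _ (by simp)
    · omega
  have hxy' : M (.x i) = .y i := hM.eq_comm.2 hyx'
  refine .inl ⟨hs.eq_of_forall_preferred_ne hvalid hM (by simp) (fun d hd h => ?_)
    (fun d hd h => ?_), hxy'⟩
  · have := hvalid.one_le hd; omega
  · rcases hprefs.eq_of_rank_w_lt hvalid hd (hwv ▸ h) with rfl | ⟨j, rfl⟩
    · exact fun h' => by simp [hM.eq_comm.1 h'] at hxy'
    · exact ha j _ (by simp)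

theorem exists_eq_coverMatching (hs : IsStable rank M) (hvalid : ValidRank rank)
    (hM : IsMatching M) (hprefs : ReductionPrefs G rank) :
    ∃ C : Finset V, M = coverMatching C := by
  refine ⟨univ.filter fun i => M (.v i) = .w i, funext fun z => ?_⟩
  cases z with
  | a j => exact hs.apply_a_eq_b hvalid hM hprefs j
  | b j => exact hM.eq_comm.1 (hs.apply_a_eq_b hvalid hM hprefs j)
  | _ i =>
    rcases hs.gadget_cases hvalid hM hprefs i with ⟨hv, hx⟩ | ⟨hv, hw⟩
    · simp [coverMatching, hv, hx, hM.eq_comm.1 hv, hM.eq_comm.1 hx]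
    · simp [coverMatching, hv, hw, hM.eq_comm.1 hv, hM.eq_comm.1 hw]

end IsStable

/-- A cubic graph `G` has a vertex cover of size at most `K` iff the SR instance of the
reduction admits a stable matching whose profile is lexicographically at least
`⟨2n−K+8, 2K, n−K, 0, n−K, K⟩`, where `n` is the number of vertices of `G`. -/
theorem stmt_16 {V : Type} [Fintype V] [DecidableEq V] (G : SimpleGraph V)
    [DecidableRel G.Adj] (hcubic : ∀ i : V, G.degree i = 3)
    (rank : Agent V → Agent V → ℕ) (hvalid : ValidRank rank)
    (hprefs : ReductionPrefs G rank) (K : ℕ) :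
    (∃ C : Finset V, C.card ≤ K ∧ ∀ u u' : V, G.Adj u u' → u ∈ C ∨ u' ∈ C) ↔
      (∃ M : Agent V → Agent V, IsMatching M ∧ IsStable rank M ∧
        LexLE (targetProfile (Fintype.card V) K) (profileOf rank M)) := by
  constructor
  · rintro ⟨C, hCK, hcover⟩
    refine ⟨coverMatching C, isMatching_coverMatching C,
      (isStable_coverMatching_iff hcubic hvalid hprefs C).2 fun u u' h => hcover u u' h, ?_⟩
    rw [profileOf_coverMatching hprefs]
    exact lexLE_targetProfile_iff.2 hCK
  · rintro ⟨M, hM, hs, hlex⟩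
    obtain ⟨C, rfl⟩ := hs.exists_eq_coverMatching hvalid hM hprefs
    rw [profileOf_coverMatching hprefs] at hlex
    exact ⟨C, lexLE_targetProfile_iff.1 hlex,
      fun u u' h => (isStable_coverMatching_iff hcubic hvalid hprefs C).1 hs h⟩
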